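/- arXiv:2202.00938 — 4 statements merged into one kernel-verified Lean document; each statement's English description precedes it below -/
import Mathlib

section
/- Suppose f : ℂ → ℂ is entire and for every a, b > 0 there is a constant C(a,b) such that |f(x + iy)| ≤ C(a,b) exp(−a|x|^(1/s) + b|y|^(1/s)) for all x, y ∈ ℝ, where s > 0. Then f ≡ 0. -/
/-!
The product `g z = f z * f (I * z)` decays like `exp (-(|x| ^ (1/s) + |y| ^ (1/s)))` in every
direction, so it is a bounded entire function tending to `0` along the real axis, hence `g = 0` by
Liouville. As entire functions form an integral domain and `f (I * ·)` vanishes only if `f` does,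
`f = 0`.
-/

open Complex Filter Topology

/-- The bound at `I * z = -z.im + z.re * I` swaps the roles of the two coordinates, so in the
product the growth `b` in one factor is paid for by the decay `a` in the other. -/
lemma norm_mul_comp_I_mul_le {f : ℂ → ℂ} {a b t C : ℝ}
    (hC : ∀ x y : ℝ, ‖f (x + y * I)‖ ≤ C * Real.exp (-a * |x| ^ t + b * |y| ^ t)) (z : ℂ) :
    ‖f z * f (I * z)‖ ≤ C ^ 2 * Real.exp (-(a - b) * (|z.re| ^ t + |z.im| ^ t)) := by
  have hz : ‖f z‖ ≤ C * Real.exp (-a * |z.re| ^ t + b * |z.im| ^ t) := by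
    simpa only [re_add_im] using hC z.re z.im
  have hIz : ‖f (I * z)‖ ≤ C * Real.exp (-a * |z.im| ^ t + b * |z.re| ^ t) := by
    have hrot : ((-z.im : ℝ) : ℂ) + (z.re : ℝ) * I = I * z := by
      apply Complex.ext <;> simp
    simpa only [hrot, abs_neg] using hC (-z.im) z.re
  calc ‖f z * f (I * z)‖ = ‖f z‖ * ‖f (I * z)‖ := norm_mul _ _
    _ ≤ C * Real.exp (-a * |z.re| ^ t + b * |z.im| ^ t) *
          (C * Real.exp (-a * |z.im| ^ t + b * |z.re| ^ t)) :=
        mul_le_mul hz hIz (norm_nonneg _) ((norm_nonneg _).trans hz)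
    _ = C ^ 2 * Real.exp (-(a - b) * (|z.re| ^ t + |z.im| ^ t)) := by
        rw [mul_mul_mul_comm, ← Real.exp_add, ← sq]
        ring_nf

lemma tendsto_const_mul_exp_neg_mul_abs_rpow_atTop {t ε : ℝ} (ht : 0 < t) (hε : 0 < ε) (C : ℝ) :
    Tendsto (fun x : ℝ => C * Real.exp (-ε * |x| ^ t)) atTop (𝓝 0) := by
  have hpow : Tendsto (fun x : ℝ => |x| ^ t) atTop atTop :=
    (tendsto_rpow_atTop ht).comp tendsto_abs_atTop_atTop
  simpa using
    (Real.tendsto_exp_atBot.comp (hpow.const_mul_atTop_of_neg (neg_lt_zero.mpr hε))).const_mul C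

lemma Differentiable.eq_zero_of_norm_le_exp_neg_mul_abs_rpow {F : Type*} [NormedAddCommGroup F]
    [NormedSpace ℂ F] {g : ℂ → F} (hg : Differentiable ℂ g) {t ε C : ℝ} (ht : 0 < t)
    (hε : 0 < ε) (hC : ∀ z, ‖g z‖ ≤ C * Real.exp (-ε * (|z.re| ^ t + |z.im| ^ t))) : g = 0 := by
  have hC0 : 0 ≤ C :=
    (mul_nonneg_iff_of_pos_right (Real.exp_pos _)).mp ((norm_nonneg _).trans (hC 0))
  have hbound : ∀ z, ‖g z‖ ≤ C := fun z => by
    refine (hC z).trans (mul_le_of_le_one_right hC0 ?_)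
    rw [Real.exp_le_one_iff, neg_mul, neg_nonpos]
    positivity
  obtain ⟨c, hc⟩ := hg.exists_const_forall_eq_of_bounded
    (isBounded_iff_forall_norm_le.mpr ⟨C, Set.forall_mem_range.mpr hbound⟩)
  have hc_le : ∀ x : ℝ, ‖c‖ ≤ C * Real.exp (-ε * |x| ^ t) := fun x => by
    simpa [hc, Real.zero_rpow ht.ne'] using hC x
  have hc0 : ‖c‖ ≤ 0 :=
    ge_of_tendsto (tendsto_const_mul_exp_neg_mul_abs_rpow_atTop ht hε C) (.of_forall hc_le)
  funext z
  rw [hc, Pi.zero_apply, ← norm_le_zero_iff]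
  exact hc0

lemma Differentiable.eq_zero_of_mul_comp_const_mul_eq_zero {f : ℂ → ℂ} (hf : Differentiable ℂ f)
    {c : ℂ} (hc : c ≠ 0) (h : ∀ z, f z * f (c * z) = 0) : f = 0 := by
  have hfc : Differentiable ℂ fun z => f (c * z) := hf.comp (differentiable_id.const_mul c)
  rcases (analyticOnNhd_univ_iff_differentiable.mpr hf).eq_zero_or_eq_zero_of_mul_eq_zero
      (analyticOnNhd_univ_iff_differentiable.mpr hfc) (fun z _ => h z) isPreconnected_univ
    with hf0 | hfc0
  · exact funext fun z => hf0 z trivial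
  · funext z
    simpa [mul_inv_cancel_left₀ hc] using hfc0 (c⁻¹ * z) trivial

theorem stmt_2 (s : ℝ) (hs : 0 < s) (f : ℂ → ℂ) (hf : Differentiable ℂ f)
    (h : ∀ a b : ℝ, 0 < a → 0 < b → ∃ C : ℝ, ∀ x y : ℝ,
      ‖f (x + y * Complex.I)‖ ≤ C * Real.exp (-a * |x| ^ (1/s) + b * |y| ^ (1/s))) :
    ∀ z : ℂ, f z = 0 := by
  obtain ⟨C, hC⟩ := h 2 1 two_pos one_pos
  have hprod : (fun z => f z * f (I * z)) = 0 :=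
    (hf.mul (hf.comp (differentiable_id.const_mul I))).eq_zero_of_norm_le_exp_neg_mul_abs_rpow
      (one_div_pos.mpr hs) (by norm_num) (norm_mul_comp_I_mul_le hC)
  exact congrFun (hf.eq_zero_of_mul_comp_const_mul_eq_zero I_ne_zero (congrFun hprod))
end

section
/- Let φ₁, φ₂, f, g ∈ 𝒮(ℝⁿ) (Schwartz functions). Then the 2n-dimensional Fourier transform of the product conj(V_{φ₁} f) · V_{φ₂} g, evaluated at (η, y), equals e^(−i⟨y,η⟩) V_{φ₂} φ₁(y, −η) · V_f g(−y, η). -/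
/-!
Writing `V_φ f(x, ξ) = (2π)^(-n/2) 𝓕(f · conj (φ (· - x)))(ξ / 2π)` with Mathlib's Fourier
transform `𝓕`, Plancherel's theorem for the two windowed functions turns the inner `ξ`-integral
into `e^(-i⟨x,η⟩) ∫ conj (f t) φ₁(t - x) g(t - y) conj (φ₂(t - y - x)) dt`. This integrand
regroups as `F(t - y) Φ(t - x)` with `F = g · conj (f (· + y))` and `Φ = φ₁ · conj (φ₂ (· - y))`,
so the `x`-integral is the Fourier transform of a convolution; it factors, and the two factors
are the short-time Fourier transforms `V_f g(-y, η)` (up to the phase `e^(-i⟨y,η⟩)` coming from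
the translation) and `V_{φ₂} φ₁(y, -η)`.
-/

open MeasureTheory ComplexConjugate in
/-- Short-time Fourier transform `V_φ f(x, ξ)` on `ℝⁿ`. -/
noncomputable def STFT {n : ℕ} (φ f : EuclideanSpace ℝ (Fin n) → ℂ)
    (x ξ : EuclideanSpace ℝ (Fin n)) : ℂ :=
  ((2 * Real.pi) ^ (-(n : ℝ) / 2) : ℝ) *
    ∫ y : EuclideanSpace ℝ (Fin n),
      f y * conj (φ (y - x)) * Complex.exp (-Complex.I * ((inner ℝ y ξ : ℝ) : ℂ))

open MeasureTheory ComplexConjugate FourierTransform Convolution Real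
open scoped RealInnerProductSpace

namespace Real

theorem rpow_div_two_mul_rpow_div_two {x : ℝ} (hx : 0 < x) (a : ℝ) :
    x ^ (a / 2) * x ^ (a / 2) = x ^ a := by
  rw [← rpow_add hx, add_halves]

theorem fourierChar_neg_inner_two_pi_inv_smul {V : Type*} [NormedAddCommGroup V]
    [InnerProductSpace ℝ V] (x ξ : V) :
    (𝐞 (-⟪x, (2 * π)⁻¹ • ξ⟫) : ℂ) = Complex.exp (-Complex.I * ⟪x, ξ⟫) := by
  rw [fourierChar_apply, real_inner_smul_right]
  congr 1
  push_cast
  field_simp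

variable {V : Type*} [NormedAddCommGroup V] [InnerProductSpace ℝ V] [FiniteDimensional ℝ V]
  [MeasurableSpace V] [BorelSpace V]

theorem fourier_comp_sub_const {F : Type*} [NormedAddCommGroup F] [NormedSpace ℂ F]
    (u : V → F) (y w : V) :
    𝓕 (fun t ↦ u (t - y)) w = 𝐞 (-⟪y, w⟫) • 𝓕 u w := by
  simp_rw [fourier_eq, Circle.smul_def, ← integral_smul]
  rw [← integral_add_right_eq_self _ y]
  congr 1 with t
  rw [add_sub_cancel_right, inner_add_left, neg_add, AddChar.map_add_eq_mul, Circle.coe_mul,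
    mul_smul, smul_comm]

theorem fourier_comp_neg {F : Type*} [NormedAddCommGroup F] [NormedSpace ℂ F]
    (u : V → F) (w : V) : 𝓕 (fun t ↦ u (-t)) w = 𝓕 u (-w) := by
  rw [← fourierInv_eq_fourier_comp_neg, fourierInv_eq_fourier_neg]

theorem integral_mul_exp_neg_inner (u : V → ℂ) (ξ : V) :
    ∫ t, u t * Complex.exp (-Complex.I * ⟪t, ξ⟫) = 𝓕 u ((2 * π)⁻¹ • ξ) := by
  rw [fourier_eq]
  congr 1 with t
  rw [← fourierChar_neg_inner_two_pi_inv_smul, Circle.smul_def, smul_eq_mul, mul_comm]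

end Real

namespace SchwartzMap

section windowed

variable {V : Type*} [NormedAddCommGroup V] [NormedSpace ℝ V]

noncomputable def windowed (φ f : 𝓢(V, ℂ)) (x : V) : 𝓢(V, ℂ) :=
  pairing ((ContinuousLinearMap.mul ℝ ℂ).bilinearComp (ContinuousLinearMap.id ℝ ℂ)
    Complex.conjCLE.toContinuousLinearMap) f (compSubConstCLM ℝ x φ)

@[simp]
theorem windowed_apply (φ f : 𝓢(V, ℂ)) (x t : V) :
    windowed φ f x t = f t * conj (φ (t - x)) := rfl

theorem conj_windowed_mul_windowed_sub (φ₁ φ₂ f g : 𝓢(V, ℂ)) (x y t : V) :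
    conj (windowed φ₁ f x t) * windowed φ₂ g x (t - y) =
      windowed f g (-y) (t - y) * windowed φ₂ φ₁ y (t - x) := by
  simp only [windowed_apply, map_mul, Complex.conj_conj, sub_neg_eq_add, sub_add_cancel,
    sub_right_comm t y x]
  ring

end windowed

variable {V : Type*} [NormedAddCommGroup V] [InnerProductSpace ℝ V] [FiniteDimensional ℝ V]
  [MeasurableSpace V] [BorelSpace V]

theorem integral_conj_fourier_mul_fourier_mul_fourierChar (h k : 𝓢(V, ℂ)) (y : V) :
    ∫ w, conj (𝓕 ⇑h w) * 𝓕 ⇑k w * 𝐞 (-⟪y, w⟫) = ∫ t, conj (h t) * k (t - y) := by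
  have hk : ∀ w, 𝓕 ⇑k w * 𝐞 (-⟪y, w⟫) = 𝓕 ⇑(compSubConstCLM ℂ y k) w := fun w ↦ by
    rw [show ⇑(compSubConstCLM ℂ y k) = fun t ↦ k (t - y) from rfl,
      Real.fourier_comp_sub_const, Circle.smul_def, smul_eq_mul, mul_comm]
  simp_rw [mul_assoc, hk, ← fourier_coe]
  simpa only [RCLike.inner_apply', compSubConstCLM_apply] using
    integral_inner_fourier_fourier h (compSubConstCLM ℂ y k)

theorem integral_conj_fourier_mul_fourier_mul_exp (h k : 𝓢(V, ℂ)) (y : V) :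
    ∫ ξ, conj (𝓕 ⇑h ((2 * π)⁻¹ • ξ)) * 𝓕 ⇑k ((2 * π)⁻¹ • ξ) *
        Complex.exp (-Complex.I * ⟪y, ξ⟫) =
      (2 * π) ^ Module.finrank ℝ V • ∫ t, conj (h t) * k (t - y) := by
  simp_rw [← Real.fourierChar_neg_inner_two_pi_inv_smul]
  rw [Measure.integral_comp_inv_smul_of_nonneg volume
    (fun w ↦ conj (𝓕 ⇑h w) * 𝓕 ⇑k w * 𝐞 (-⟪y, w⟫)) (by positivity),
    integral_conj_fourier_mul_fourier_mul_fourierChar]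

end SchwartzMap

open SchwartzMap

section STFT

variable {n : ℕ}

local notation "E" => EuclideanSpace ℝ (Fin n)

theorem stft_eq_fourier_windowed (φ f : 𝓢(E, ℂ)) (x ξ : E) :
    STFT ⇑φ ⇑f x ξ = ((2 * π) ^ (-(n : ℝ) / 2) : ℝ) * 𝓕 ⇑(windowed φ f x) ((2 * π)⁻¹ • ξ) := by
  rw [STFT, ← Real.integral_mul_exp_neg_inner]
  rfl

theorem integral_conj_stft_mul_stft (φ₁ φ₂ f g : 𝓢(E, ℂ)) (x y : E) :
    ∫ ξ, conj (STFT ⇑φ₁ ⇑f x ξ) * STFT ⇑φ₂ ⇑g x ξ * Complex.exp (-Complex.I * ⟪ξ, y⟫) =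
      ∫ t, conj (windowed φ₁ f x t) * windowed φ₂ g x (t - y) := by
  set c : ℝ := (2 * π) ^ (-(n : ℝ) / 2)
  have hc : c * c * (2 * π) ^ n = 1 := by
    rw [rpow_div_two_mul_rpow_div_two (by positivity), rpow_neg (by positivity), rpow_natCast,
      inv_mul_cancel₀ (by positivity)]
  have hξ : ∀ ξ, conj (STFT ⇑φ₁ ⇑f x ξ) * STFT ⇑φ₂ ⇑g x ξ * Complex.exp (-Complex.I * ⟪ξ, y⟫) =
      ((c * c : ℝ) : ℂ) * (conj (𝓕 ⇑(windowed φ₁ f x) ((2 * π)⁻¹ • ξ)) *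
        𝓕 ⇑(windowed φ₂ g x) ((2 * π)⁻¹ • ξ) * Complex.exp (-Complex.I * ⟪y, ξ⟫)) := fun ξ ↦ by
    rw [stft_eq_fourier_windowed, stft_eq_fourier_windowed, map_mul, Complex.conj_ofReal,
      real_inner_comm y]
    push_cast
    ring
  simp_rw [hξ, integral_const_mul, integral_conj_fourier_mul_fourier_mul_exp,
    finrank_euclideanSpace_fin, Complex.real_smul, ← mul_assoc, ← Complex.ofReal_mul, hc,
    Complex.ofReal_one, one_mul]

end STFT

open MeasureTheory ComplexConjugate in
theorem stmt_11 {n : ℕ} (φ₁ φ₂ f g : SchwartzMap (EuclideanSpace ℝ (Fin n)) ℂ) :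
    ∀ η y : EuclideanSpace ℝ (Fin n),
      ((2 * Real.pi) ^ (-(n : ℝ)) : ℝ) *
          (∫ x : EuclideanSpace ℝ (Fin n), ∫ ξ : EuclideanSpace ℝ (Fin n),
            conj (STFT (⇑φ₁) (⇑f) x ξ) * STFT (⇑φ₂) (⇑g) x ξ *
              Complex.exp (-Complex.I * ((inner ℝ x η : ℝ) : ℂ) -
                Complex.I * ((inner ℝ ξ y : ℝ) : ℂ))) =
        Complex.exp (-Complex.I * ((inner ℝ y η : ℝ) : ℂ)) *
          STFT (⇑φ₂) (⇑φ₁) y (-η) * STFT (⇑f) (⇑g) (-y) η := by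
  intro η y
  have hx : ∀ x, ∫ ξ, conj (STFT ⇑φ₁ ⇑f x ξ) * STFT ⇑φ₂ ⇑g x ξ *
        Complex.exp (-Complex.I * ⟪x, η⟫ - Complex.I * ⟪ξ, y⟫) =
      ((fun t ↦ windowed f g (-y) (t - y)) ⋆[ContinuousLinearMap.mul ℂ ℂ]
          fun u ↦ windowed φ₂ φ₁ y (-u)) x * Complex.exp (-Complex.I * ⟪x, η⟫) := fun x ↦ by
    have hexp : ∀ ξ, Complex.exp (-Complex.I * ⟪x, η⟫ - Complex.I * ⟪ξ, y⟫) =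
        Complex.exp (-Complex.I * ⟪ξ, y⟫) * Complex.exp (-Complex.I * ⟪x, η⟫) := fun ξ ↦ by
      rw [← Complex.exp_add]
      ring_nf
    simp_rw [hexp, ← mul_assoc, integral_mul_const, integral_conj_stft_mul_stft,
      conj_windowed_mul_windowed_sub, convolution_def, ContinuousLinearMap.mul_apply', neg_sub]
  simp_rw [hx, Real.integral_mul_exp_neg_inner,
    Real.fourier_mul_convolution_eq ((windowed f g (-y)).integrable.comp_sub_right y)
      (windowed φ₂ φ₁ y).integrable.comp_neg,
    Real.fourier_comp_sub_const, Real.fourier_comp_neg, stft_eq_fourier_windowed, smul_neg,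
    Circle.smul_def, Real.fourierChar_neg_inner_two_pi_inv_smul, smul_eq_mul]
  rw [← rpow_div_two_mul_rpow_div_two (by positivity : 0 < 2 * π)]
  push_cast
  ring
end

section
/- Let r₁ > r > 0, s > 0, and let c ≥ 1 be such that −r₁|y − x|^{1/s} ≤ r₁|x|^{1/s} − (r₁/c)|y|^{1/s} for all x, y ∈ ℝⁿ. Then for any 0 < r < r₁/(2c): ∫_{ℝⁿ} e^{−r₁|y−x|^{1/s}} e^{r|y|^{1/s}} dy ≤ B e^{2cr|x|^{1/s}}, where B = ∫ e^{−r|y|^{1/s}} dy < ∞. -/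
/-!
Since `2 c r ≤ r₁`, the hypothesis on `r₁` and `c`, multiplied by `2 c r / r₁`, gives
`-r₁ |y - x|^{1/s} + r |y|^{1/s} ≤ 2 c r |x|^{1/s} - r |y|^{1/s}` for all `x`, `y`.
So the integrand is dominated by `e^{-r|y|^{1/s}} e^{2cr|x|^{1/s}}`, which is integrable because
`e^{-r|y|^{1/s}}` is a radial function whose profile `t^{n-1} e^{-r t^{1/s}}` is integrable on `(0, ∞)`.
-/

open MeasureTheory

theorem integrable_exp_neg_mul_norm_rpow {E : Type*} [NormedAddCommGroup E] [NormedSpace ℝ E]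
    [FiniteDimensional ℝ E] [MeasurableSpace E] [BorelSpace E] (μ : Measure E)
    [μ.IsAddHaarMeasure] {b p : ℝ} (hb : 0 < b) (hp : 0 < p) :
    Integrable (fun x : E => Real.exp (-b * ‖x‖ ^ p)) μ := by
  obtain hE | hE := subsingleton_or_nontrivial E
  · exact .of_finite
  · rw [integrable_fun_norm_addHaar μ (f := fun t => Real.exp (-b * t ^ p))]
    have hdim : (-1 : ℝ) < (Module.finrank ℝ E - 1 : ℕ) :=
      lt_of_lt_of_le neg_one_lt_zero (Nat.cast_nonneg _)
    simpa only [Real.rpow_natCast, smul_eq_mul] using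
      integrableOn_rpow_mul_exp_neg_mul_rpow hdim hp hb

theorem exp_neg_mul_mul_exp_le {r₁ c r A X Y : ℝ} (hr₁ : 0 < r₁) (hc : 0 < c) (hr : 0 < r)
    (hcr : 2 * c * r ≤ r₁) (hA : 0 ≤ A) (h : -r₁ * A ≤ r₁ * X - r₁ / c * Y) :
    Real.exp (-r₁ * A) * Real.exp (r * Y) ≤ Real.exp (-r * Y) * Real.exp (2 * c * r * X) := by
  rw [← Real.exp_add, ← Real.exp_add, Real.exp_le_exp]
  have hAXY : -A ≤ X - Y / c := by
    rw [← mul_le_mul_iff_of_pos_left hr₁]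
    linarith [mul_div_assoc r₁ Y c, div_mul_eq_mul_div r₁ c Y]
  have hscaled : 2 * c * r * -A ≤ 2 * c * r * X - 2 * r * Y := by
    have := mul_le_mul_of_nonneg_left hAXY (by positivity : (0 : ℝ) ≤ 2 * c * r)
    rwa [mul_sub, show 2 * c * r * (Y / c) = 2 * r * Y by field_simp] at this
  linarith [mul_le_mul_of_nonneg_right hcr hA]

open MeasureTheory in
theorem stmt_17 (n : ℕ) (s r₁ c r : ℝ) (hs : 0 < s) (hr₁ : 0 < r₁) (hc : 1 ≤ c)
    (hineq : ∀ x y : EuclideanSpace ℝ (Fin n),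
      -r₁ * ‖y - x‖ ^ (1/s) ≤ r₁ * ‖x‖ ^ (1/s) - (r₁ / c) * ‖y‖ ^ (1/s))
    (hr : 0 < r) (hrr : r < r₁ / (2 * c)) :
    Integrable (fun y : EuclideanSpace ℝ (Fin n) => Real.exp (-r * ‖y‖ ^ (1/s))) ∧
    ∀ x : EuclideanSpace ℝ (Fin n),
      (∫ y : EuclideanSpace ℝ (Fin n),
          Real.exp (-r₁ * ‖y - x‖ ^ (1/s)) * Real.exp (r * ‖y‖ ^ (1/s))) ≤
        (∫ y : EuclideanSpace ℝ (Fin n), Real.exp (-r * ‖y‖ ^ (1/s))) *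
          Real.exp (2 * c * r * ‖x‖ ^ (1/s)) := by
  have hInt := integrable_exp_neg_mul_norm_rpow (volume : Measure (EuclideanSpace ℝ (Fin n))) hr (one_div_pos.mpr hs)
  refine ⟨hInt, fun x => ?_⟩
  have hc₀ : 0 < c := zero_lt_one.trans_le hc
  have hcr : 2 * c * r ≤ r₁ := by
    rw [lt_div_iff₀ (by positivity)] at hrr
    linarith
  have hdom : ∀ y : EuclideanSpace ℝ (Fin n),
      Real.exp (-r₁ * ‖y - x‖ ^ (1/s)) * Real.exp (r * ‖y‖ ^ (1/s)) ≤
        Real.exp (-r * ‖y‖ ^ (1/s)) * Real.exp (2 * c * r * ‖x‖ ^ (1/s)) := fun y =>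
    exp_neg_mul_mul_exp_le hr₁ hc₀ hr hcr (by positivity) (hineq x y)
  calc _ ≤ ∫ y : EuclideanSpace ℝ (Fin n),
          Real.exp (-r * ‖y‖ ^ (1/s)) * Real.exp (2 * c * r * ‖x‖ ^ (1/s)) :=
        integral_mono_of_nonneg (.of_forall fun y => by positivity) (hInt.mul_const _)
          (.of_forall hdom)
    _ = _ := integral_mul_const _ _
end

section
/- Let s > 0 and suppose f : ℝⁿ → ℂ satisfies |f(x)| ≤ C₀ e^{−r₁|x|^{1/s}} and φ : ℝⁿ → ℂ satisfies |φ(x)| ≤ C₁ e^{−r₂|x|^{1/s}} for some r₁, r₂, C₀, C₁ > 0. Then there exist C, r > 0 such that ∫_{ℝⁿ} |f(y)| |φ(y − x)| dy ≤ C e^{−r|x|^{1/s}} for all x ∈ ℝⁿ. -/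
open MeasureTheory Real

/-- `exp (-ρ‖y‖^a)` is integrable on a finite dimensional Euclidean space. -/
lemma aux_integrable_exp_neg_rpow {n : ℕ} {ρ a : ℝ} (hρ : 0 < ρ) (ha : 0 < a) :
    Integrable (fun y : EuclideanSpace ℝ (Fin n) => Real.exp (-ρ * ‖y‖ ^ a)) := by
  -- find B with exp (-ρ t^a) ≤ B * (1+t)^(-(n+1)) for all t ≥ 0
  obtain ⟨B, hB0, hB⟩ : ∃ B : ℝ, 0 < B ∧ ∀ t : ℝ, 0 ≤ t →
      Real.exp (-ρ * t ^ a) ≤ B * (1 + t) ^ (-((n : ℝ) + 1)) := by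
    set c : ℝ := ((n : ℝ) + 1) / a with hc
    have h0 : Filter.Tendsto (fun u : ℝ => u ^ c * Real.exp (-ρ * u)) Filter.atTop (nhds 0) :=
      tendsto_rpow_mul_exp_neg_mul_atTop_nhds_zero c ρ hρ
    have h1 : Filter.Tendsto (fun t : ℝ => t ^ a) Filter.atTop Filter.atTop :=
      tendsto_rpow_atTop ha
    have h2 : Filter.Tendsto (fun t : ℝ => (t ^ a) ^ c * Real.exp (-ρ * t ^ a))
        Filter.atTop (nhds 0) := h0.comp h1
    have h3 : ∀ᶠ t : ℝ in Filter.atTop, (t ^ a) ^ c * Real.exp (-ρ * t ^ a) ≤ 1 := by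
      filter_upwards [h2.eventually (eventually_le_nhds (by norm_num : (0:ℝ) < 1))] with t ht
      exact ht
    obtain ⟨T, hT⟩ := (h3.and (Filter.eventually_ge_atTop (1 : ℝ))).exists_forall_of_atTop
    set T' : ℝ := max T 1 with hT'
    have hT'1 : (1 : ℝ) ≤ T' := le_max_right _ _
    refine ⟨max ((2:ℝ) ^ ((n : ℝ) + 1)) ((1 + T') ^ ((n : ℝ) + 1)), lt_max_of_lt_left (by positivity), fun t ht => ?_⟩
    rcases le_or_gt t T' with h | h
    · -- small t : exp ≤ 1 ≤ (1+T')^(n+1) * (1+t)^(-(n+1))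
      have h1t : (0:ℝ) < 1 + t := by linarith
      have : Real.exp (-ρ * t ^ a) ≤ 1 := by
        apply Real.exp_le_one_iff.mpr
        have := Real.rpow_nonneg ht a
        nlinarith
      refine this.trans ?_
      rw [Real.rpow_neg h1t.le, ← div_eq_mul_inv, le_div_iff₀ (by positivity), one_mul]
      calc (1 + t) ^ ((n:ℝ) + 1) ≤ (1 + T') ^ ((n:ℝ)+1) :=
            Real.rpow_le_rpow h1t.le (by linarith) (by positivity)
        _ ≤ _ := le_max_right _ _
    · -- large t : use hT
      have ht1 : (1:ℝ) ≤ t := le_trans hT'1 h.le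
      have ht0 : (0:ℝ) < t := by linarith
      have key : (t ^ a) ^ c * Real.exp (-ρ * t ^ a) ≤ 1 :=
        (hT t (le_trans (le_max_left _ _) h.le)).1
      have htac : (t ^ a) ^ c = t ^ ((n:ℝ) + 1) := by
        rw [← Real.rpow_mul ht0.le, hc]
        congr 1
        field_simp
      have hexp : Real.exp (-ρ * t ^ a) ≤ t ^ (-((n:ℝ) + 1)) := by
        rw [Real.rpow_neg ht0.le, ← one_div, le_div_iff₀ (by positivity), mul_comm]
        rw [htac] at key; exact key
      refine hexp.trans ?_
      rw [Real.rpow_neg ht0.le, Real.rpow_neg (by linarith : (0:ℝ) ≤ 1 + t),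
        ← one_div, ← one_div, mul_one_div, div_le_div_iff₀ (by positivity) (by positivity), one_mul]
      calc (1 + t) ^ ((n:ℝ) + 1) ≤ (2 * t) ^ ((n:ℝ)+1) :=
            Real.rpow_le_rpow (by linarith) (by linarith) (by positivity)
        _ = 2 ^ ((n:ℝ)+1) * t ^ ((n:ℝ)+1) := Real.mul_rpow (by norm_num) ht0.le
        _ ≤ _ := by
            apply mul_le_mul_of_nonneg_right (le_max_left _ _) (by positivity)
  have hdim : (Module.finrank ℝ (EuclideanSpace ℝ (Fin n)) : ℝ) < (n : ℝ) + 1 := by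
    simp [finrank_euclideanSpace]
  refine ((integrable_one_add_norm hdim).const_mul B).mono' ?_
    (Filter.Eventually.of_forall fun y => ?_)
  · apply Continuous.aestronglyMeasurable
    exact Real.continuous_exp.comp ((continuous_const.mul ((continuous_norm).rpow_const
      (fun y => Or.inr ha.le))))
  · rw [Real.norm_eq_abs, abs_of_pos (Real.exp_pos _)]
    exact hB ‖y‖ (norm_nonneg _)

open MeasureTheory in
theorem stmt_19 {n : ℕ} (s : ℝ) (hs : 0 < s)
    (f φ : EuclideanSpace ℝ (Fin n) → ℂ) (C₀ C₁ r₁ r₂ : ℝ)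
    (hC₀ : 0 < C₀) (hC₁ : 0 < C₁) (hr₁ : 0 < r₁) (hr₂ : 0 < r₂)
    (hf : ∀ x, ‖f x‖ ≤ C₀ * Real.exp (-r₁ * ‖x‖ ^ (1/s)))
    (hφ : ∀ x, ‖φ x‖ ≤ C₁ * Real.exp (-r₂ * ‖x‖ ^ (1/s))) :
    ∃ C r : ℝ, 0 < C ∧ 0 < r ∧ ∀ x : EuclideanSpace ℝ (Fin n),
      (∫ y : EuclideanSpace ℝ (Fin n), ‖f y‖ * ‖φ (y - x)‖) ≤
        C * Real.exp (-r * ‖x‖ ^ (1/s)) := by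
  set a : ℝ := 1 / s with ha_def
  have ha : 0 < a := by positivity
  set ρ : ℝ := min r₁ r₂ / 2 with hρ_def
  have hρ : 0 < ρ := by
    have := lt_min hr₁ hr₂; positivity
  set r : ℝ := ρ / 2 ^ a with hr_def
  have hr : 0 < r := by positivity
  have hint := aux_integrable_exp_neg_rpow (n := n) hρ ha
  set I : ℝ := ∫ y : EuclideanSpace ℝ (Fin n), Real.exp (-ρ * ‖y‖ ^ a) with hI_def
  have hI0 : 0 ≤ I := integral_nonneg fun y => (Real.exp_pos _).le
  refine ⟨C₀ * C₁ * I + 1, r, by positivity, hr, fun x => ?_⟩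
  -- pointwise bound
  have key : ∀ y : EuclideanSpace ℝ (Fin n),
      ‖f y‖ * ‖φ (y - x)‖ ≤
        (C₀ * C₁ * Real.exp (-r * ‖x‖ ^ a)) * Real.exp (-ρ * ‖y‖ ^ a) := by
    intro y
    have h1 : ‖f y‖ * ‖φ (y - x)‖ ≤
        (C₀ * Real.exp (-r₁ * ‖y‖ ^ a)) * (C₁ * Real.exp (-r₂ * ‖y - x‖ ^ a)) :=
      mul_le_mul (hf y) (hφ (y - x)) (norm_nonneg _) (by positivity)
    refine h1.trans ?_
    have e1 : (C₀ * Real.exp (-r₁ * ‖y‖ ^ a)) * (C₁ * Real.exp (-r₂ * ‖y - x‖ ^ a))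
        = C₀ * C₁ * Real.exp (-r₁ * ‖y‖ ^ a + -r₂ * ‖y - x‖ ^ a) := by
      rw [Real.exp_add]; ring
    have e2 : (C₀ * C₁ * Real.exp (-r * ‖x‖ ^ a)) * Real.exp (-ρ * ‖y‖ ^ a)
        = C₀ * C₁ * Real.exp (-r * ‖x‖ ^ a + -ρ * ‖y‖ ^ a) := by
      rw [Real.exp_add]; ring
    rw [e1, e2]
    apply mul_le_mul_of_nonneg_left _ (by positivity)
    apply Real.exp_le_exp.mpr
    -- need : -r₁‖y‖^a - r₂‖y-x‖^a ≤ -r‖x‖^a - ρ‖y‖^a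
    have hxa : ‖x‖ ^ a ≤ 2 ^ a * (‖y‖ ^ a + ‖y - x‖ ^ a) := by
      have hx : ‖x‖ ≤ ‖y‖ + ‖y - x‖ := by
        have h := norm_sub_le y (y - x)
        rwa [show y - (y - x) = x by abel] at h
      set M : ℝ := max ‖y‖ ‖y - x‖ with hM
      have hM0 : 0 ≤ M := le_trans (norm_nonneg _) (le_max_left _ _)
      have hx2 : ‖x‖ ≤ 2 * M := by
        refine hx.trans ?_
        have := le_max_left ‖y‖ ‖y - x‖
        have := le_max_right ‖y‖ ‖y - x‖
        linarith
      calc ‖x‖ ^ a ≤ (2 * M) ^ a := Real.rpow_le_rpow (norm_nonneg _) hx2 ha.le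
        _ = 2 ^ a * M ^ a := Real.mul_rpow (by norm_num) hM0
        _ ≤ 2 ^ a * (‖y‖ ^ a + ‖y - x‖ ^ a) := by
            apply mul_le_mul_of_nonneg_left _ (by positivity)
            rcases max_cases ‖y‖ ‖y - x‖ with ⟨h, _⟩ | ⟨h, _⟩ <;> rw [hM, h] <;>
              [(have := Real.rpow_nonneg (norm_nonneg (y - x)) a; linarith);
               (have := Real.rpow_nonneg (norm_nonneg y) a; linarith)]
    have h2ρ : 2 * ρ ≤ r₁ ∧ 2 * ρ ≤ r₂ := by
      constructor <;> rw [hρ_def] <;>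
        [linarith [min_le_left r₁ r₂]; linarith [min_le_right r₁ r₂]]
    have hya := Real.rpow_nonneg (norm_nonneg y) a
    have hyxa := Real.rpow_nonneg (norm_nonneg (y - x)) a
    have hrx : r * ‖x‖ ^ a ≤ ρ * (‖y‖ ^ a + ‖y - x‖ ^ a) := by
      rw [hr_def, div_mul_eq_mul_div, div_le_iff₀ (by positivity)]
      calc ρ * ‖x‖ ^ a ≤ ρ * (2 ^ a * (‖y‖ ^ a + ‖y - x‖ ^ a)) :=
            mul_le_mul_of_nonneg_left hxa hρ.le
        _ = ρ * (‖y‖ ^ a + ‖y - x‖ ^ a) * 2 ^ a := by ring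
    nlinarith [h2ρ.1, h2ρ.2]
  -- integrate the bound
  calc (∫ y : EuclideanSpace ℝ (Fin n), ‖f y‖ * ‖φ (y - x)‖)
      ≤ ∫ y : EuclideanSpace ℝ (Fin n),
          (C₀ * C₁ * Real.exp (-r * ‖x‖ ^ a)) * Real.exp (-ρ * ‖y‖ ^ a) := by
        apply integral_mono_of_nonneg
        · exact Filter.Eventually.of_forall fun y => by positivity
        · exact hint.const_mul _
        · exact Filter.Eventually.of_forall key
    _ = (C₀ * C₁ * Real.exp (-r * ‖x‖ ^ a)) * I := by
        rw [integral_const_mul]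
    _ ≤ (C₀ * C₁ * I + 1) * Real.exp (-r * ‖x‖ ^ a) := by
        have := Real.exp_pos (-r * ‖x‖ ^ a)
        nlinarith
end
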